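/- Consider the two-agent exchange protocol challenge without a trusted third party: agents Alice and Bob, where the correctness condition requires both items to be exchanged, and each of Alice and Bob is wronged exactly when they send their item but never receive the other's. Then there is no safe protocol P with P ⊆ Corr: any protocol contained in Corr admits an attack by the singleton alliance {Alice} or {Bob}. -/
import Mathlib


namespace Stmt7

/-- The two agents. -/
inductive Agent
  | alice
  | bob
deriving DecidableEq

open Agent

/-- A behavior of an agent: the time at which they send their item,
or `none` if they never send it. -/
abbrev Behavior := Option ℕ

abbrev Profile := Agent → Behavior

/-- Alice is wronged iff she sends item₁ but never receives item₂ (i.e. Bob never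
sends it); symmetrically for Bob. -/
def Wrong : Agent → Set Profile
  | alice => {β | β alice ≠ none ∧ β bob = none}
  | bob => {β | β bob ≠ none ∧ β alice = none}

/-- Correctness: both items are eventually exchanged. -/
def Corr : Set Profile := {β | β alice ≠ none ∧ β bob ≠ none}

def IsAttack (P : Set Profile) (C : Set Agent) (α : Profile) : Prop :=
  (∃ β ∈ P, ∀ a ∉ C, α a = β a) ∧
  (∀ a ∈ C, α ∉ Wrong a) ∧
  (∃ a, a ∉ C ∧ α ∈ Wrong a)

/-- In the two-agent exchange without a trusted third party, no protocol contained in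
the correctness condition is safe: there is always an attack by the singleton alliance
`{alice}` or `{bob}`. -/
theorem stmt7 (P : Set Profile) (hP : P.Nonempty) (hPC : P ⊆ Corr) :
    ∃ α : Profile,
      IsAttack P {alice} α ∨ IsAttack P {bob} α := by
  obtain ⟨β, hβ⟩ := hP
  obtain ⟨_, hb⟩ := hPC hβ
  refine ⟨fun a => match a with | alice => none | bob => β bob, Or.inl ?_⟩
  refine ⟨⟨β, hβ, fun a ha => ?_⟩, fun a ha => ?_, bob, ?_⟩
  · cases a with
    | alice => exact absurd rfl ha
    | bob => rfl
  · rcases ha with rfl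
    simp [Wrong]
  · refine ⟨by simp, hb, rfl⟩

end Stmt7
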